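/- arXiv:2510.27336 — 4 statements merged into one kernel-verified Lean document; each statement's English description precedes it below -/
import Mathlib

section
/- Let y ∈ C([0,1]) with y'' ∈ L²(0,1) and y'(0) = y'(1) = 0. Let I_h y be the modified piecewise linear interpolant on the partition 0 = x₀ < x₁ < ... < xₙ = 1 with mesh size h, which equals y(x_i) at interior nodes x₁,...,x_{n-1} and is constant equal to y(x₁) on [x₀,x₁] and equal to y(x_{n-1}) on [x_{n-1},x_n]. Then ‖(I_h y)' - y'‖_{L²(0,1)} ≤ (1/√2) h ‖y''‖_{L²(0,1)}. -/
open MeasureTheory intervalIntegral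

lemma cs_lemma (f : ℝ → ℝ) (c d : ℝ) (hcd : c ≤ d)
    (h1 : IntervalIntegrable f volume c d)
    (h2 : IntervalIntegrable (fun t => f t ^ 2) volume c d) :
    (∫ t in c..d, f t) ^ 2 ≤ (d - c) * ∫ t in c..d, f t ^ 2 := by
  rcases eq_or_lt_of_le hcd with rfl | hlt
  · simp
  set L := d - c with hL
  have hL0 : 0 < L := by simp [hL]; linarith
  set I := ∫ t in c..d, f t with hI
  set J := ∫ t in c..d, f t ^ 2 with hJ
  set m := I / L with hm
  have hexp : ∫ t in c..d, (f t - m) ^ 2 = J - 2 * m * I + m ^ 2 * L := by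
    have heq : (fun t => (f t - m) ^ 2) = fun t => (f t ^ 2 - 2 * m * f t) + m ^ 2 := by
      funext t; ring
    rw [heq, intervalIntegral.integral_add (h2.sub ((h1.const_mul (2 * m))))
        intervalIntegrable_const,
      intervalIntegral.integral_sub h2 (h1.const_mul (2 * m)),
      intervalIntegral.integral_const_mul, intervalIntegral.integral_const]
    rw [smul_eq_mul, hL]; ring
  have hpos : 0 ≤ ∫ t in c..d, (f t - m) ^ 2 :=
    intervalIntegral.integral_nonneg hcd fun t _ => sq_nonneg _
  rw [hexp] at hpos
  have hml : m * L = I := div_mul_cancel₀ _ (ne_of_gt hL0)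
  nlinarith [mul_nonneg hL0.le hpos, hml]

lemma key_lemma (y' y'' : ℝ → ℝ) (hy' : ∀ t, HasDerivAt y' (y'' t) t)
    (a b ξ h : ℝ) (hab : a ≤ b) (hξ : ξ ∈ Set.Icc a b) (hba : b - a ≤ h)
    (h2 : IntervalIntegrable (fun t => y'' t ^ 2) volume a b)
    (h1 : IntervalIntegrable y'' volume a b) :
    ∫ t in a..b, (y' ξ - y' t) ^ 2 ≤ h ^ 2 / 2 * ∫ t in a..b, y'' t ^ 2 := by
  have hdiff : Differentiable ℝ y' := fun t => (hy' t).differentiableAt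
  have hy'cont : Continuous y' := hdiff.continuous
  set K := ∫ t in a..b, y'' t ^ 2 with hK
  have hK0 : 0 ≤ K := intervalIntegral.integral_nonneg hab fun _ _ => sq_nonneg _
  have hpt : ∀ t ∈ Set.Icc a b, (y' ξ - y' t) ^ 2 ≤ |ξ - t| * K := by
    intro t ht
    have hnn : 0 ≤ᵐ[volume.restrict (Set.Ioc a b)] fun t => y'' t ^ 2 :=
      Filter.Eventually.of_forall fun _ => sq_nonneg _
    rcases le_total t ξ with htξ | hξt
    · have hsub : Set.uIcc t ξ ⊆ Set.uIcc a b := by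
        rw [Set.uIcc_of_le htξ, Set.uIcc_of_le hab]
        exact Set.Icc_subset_Icc ht.1 hξ.2
      have hi1 := h1.mono_set hsub
      have hi2 := h2.mono_set hsub
      have hftc : ∫ s in t..ξ, y'' s = y' ξ - y' t :=
        intervalIntegral.integral_eq_sub_of_hasDerivAt (fun s _ => hy' s) hi1
      have hcs := cs_lemma y'' t ξ htξ hi1 hi2
      have hmono : ∫ s in t..ξ, y'' s ^ 2 ≤ K :=
        intervalIntegral.integral_mono_interval ht.1 htξ hξ.2 hnn h2
      calc (y' ξ - y' t) ^ 2 = (∫ s in t..ξ, y'' s) ^ 2 := by rw [hftc]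
        _ ≤ (ξ - t) * ∫ s in t..ξ, y'' s ^ 2 := hcs
        _ ≤ (ξ - t) * K := by
            apply mul_le_mul_of_nonneg_left hmono (by linarith)
        _ = |ξ - t| * K := by rw [abs_of_nonneg (by linarith)]
    · have hsub : Set.uIcc ξ t ⊆ Set.uIcc a b := by
        rw [Set.uIcc_of_le hξt, Set.uIcc_of_le hab]
        exact Set.Icc_subset_Icc hξ.1 ht.2
      have hi1 := h1.mono_set hsub
      have hi2 := h2.mono_set hsub
      have hftc : ∫ s in ξ..t, y'' s = y' t - y' ξ :=
        intervalIntegral.integral_eq_sub_of_hasDerivAt (fun s _ => hy' s) hi1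
      have hcs := cs_lemma y'' ξ t hξt hi1 hi2
      have hmono : ∫ s in ξ..t, y'' s ^ 2 ≤ K :=
        intervalIntegral.integral_mono_interval hξ.1 hξt ht.2 hnn h2
      calc (y' ξ - y' t) ^ 2 = (∫ s in ξ..t, y'' s) ^ 2 := by rw [hftc]; ring
        _ ≤ (t - ξ) * ∫ s in ξ..t, y'' s ^ 2 := hcs
        _ ≤ (t - ξ) * K := by
            apply mul_le_mul_of_nonneg_left hmono (by linarith)
        _ = |ξ - t| * K := by rw [abs_sub_comm, abs_of_nonneg (by linarith)]
  have hInt1 : IntervalIntegrable (fun t => (y' ξ - y' t) ^ 2) volume a b :=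
    (((continuous_const.sub hy'cont)).pow 2).intervalIntegrable a b
  have hInt2 : IntervalIntegrable (fun t => |ξ - t| * K) volume a b :=
    (((continuous_const.sub continuous_id).abs).mul continuous_const).intervalIntegrable a b
  have hstep := intervalIntegral.integral_mono_on hab hInt1 hInt2 hpt
  have hval : ∫ t in a..b, |ξ - t| * K = ((ξ - a) ^ 2 / 2 + (b - ξ) ^ 2 / 2) * K := by
    have hia : IntervalIntegrable (fun t => |ξ - t| * K) volume a ξ :=
      (((continuous_const.sub continuous_id).abs).mul continuous_const).intervalIntegrable a ξ
    have hib : IntervalIntegrable (fun t => |ξ - t| * K) volume ξ b :=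
      (((continuous_const.sub continuous_id).abs).mul continuous_const).intervalIntegrable ξ b
    rw [← intervalIntegral.integral_add_adjacent_intervals hia hib]
    have e1 : ∫ t in a..ξ, |ξ - t| * K = ∫ t in a..ξ, (ξ - t) * K := by
      apply intervalIntegral.integral_congr
      intro t ht
      rw [Set.uIcc_of_le hξ.1] at ht
      show |ξ - t| * K = (ξ - t) * K
      rw [abs_of_nonneg (by linarith [ht.2])]
    have e2 : ∫ t in ξ..b, |ξ - t| * K = ∫ t in ξ..b, (t - ξ) * K := by
      apply intervalIntegral.integral_congr
      intro t ht
      rw [Set.uIcc_of_le hξ.2] at ht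
      show |ξ - t| * K = (t - ξ) * K
      rw [abs_sub_comm, abs_of_nonneg (by linarith [ht.1])]
    have c1 : ∫ t in a..ξ, (ξ - t) * K = (ξ - a) ^ 2 / 2 * K := by
      have : (fun t : ℝ => (ξ - t) * K) = fun t => (ξ * K) - K * t := by funext t; ring
      rw [this, intervalIntegral.integral_sub intervalIntegrable_const
        ((intervalIntegrable_id).const_mul K)]
      rw [intervalIntegral.integral_const_mul K (fun x => x)]
      simp only [intervalIntegral.integral_const, integral_id, smul_eq_mul]
      ring
    have c2 : ∫ t in ξ..b, (t - ξ) * K = (b - ξ) ^ 2 / 2 * K := by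
      have : (fun t : ℝ => (t - ξ) * K) = fun t => K * t - (ξ * K) := by funext t; ring
      rw [this, intervalIntegral.integral_sub ((intervalIntegrable_id).const_mul K)
        intervalIntegrable_const]
      rw [intervalIntegral.integral_const_mul K (fun x => x)]
      simp only [intervalIntegral.integral_const, integral_id, smul_eq_mul]
      ring
    rw [e1, e2, c1, c2]; ring
  rw [hval] at hstep
  refine hstep.trans ?_
  have hfac : (0:ℝ) ≤ h ^ 2 / 2 - ((ξ - a) ^ 2 / 2 + (b - ξ) ^ 2 / 2) := by
    nlinarith [hξ.1, hξ.2, mul_nonneg (sub_nonneg.mpr hξ.1) (sub_nonneg.mpr hξ.2)]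
  nlinarith [mul_nonneg hfac hK0]


/-- interpolation error estimate for the derivative of the
modified piecewise linear interpolant:
‖(I_h y)' - y'‖_{L²(0,1)} ≤ (1/√2) h ‖y''‖_{L²(0,1)}. -/
theorem stmt_0
    (n : ℕ) (hn : 2 ≤ n) (x : ℕ → ℝ) (hx0 : x 0 = 0) (hxn : x n = 1)
    (hmono : ∀ i < n, x i < x (i + 1)) (h : ℝ) (hh : 0 < h)
    (hmesh : ∀ i < n, x (i + 1) - x i ≤ h)
    (y y' y'' Iy : ℝ → ℝ)
    (hy : ∀ t, HasDerivAt y (y' t) t)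
    (hy' : ∀ t, HasDerivAt y' (y'' t) t)
    (hy''L2 : IntervalIntegrable (fun t => (y'' t) ^ 2) volume 0 1)
    (hb0 : y' 0 = 0) (hb1 : y' 1 = 0)
    (hIcont : ContinuousOn Iy (Set.Icc 0 1))
    (hIval : ∀ i, 1 ≤ i → i ≤ n - 1 → Iy (x i) = y (x i))
    (hIaff : ∀ i, 1 ≤ i → i + 1 ≤ n - 1 →
      ∃ α β : ℝ, ∀ t ∈ Set.Icc (x i) (x (i + 1)), Iy t = α + β * t)
    (hIfirst : ∀ t ∈ Set.Icc (x 0) (x 1), Iy t = y (x 1))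
    (hIlast : ∀ t ∈ Set.Icc (x (n - 1)) (x n), Iy t = y (x (n - 1))) :
    Real.sqrt (∫ t in (0:ℝ)..1, (deriv Iy t - y' t) ^ 2) ≤
      (1 / Real.sqrt 2) * h * Real.sqrt (∫ t in (0:ℝ)..1, (y'' t) ^ 2) := by
  have hdiffy : Differentiable ℝ y := fun t => (hy t).differentiableAt
  have hycont : Continuous y := hdiffy.continuous
  have hdiffy' : Differentiable ℝ y' := fun t => (hy' t).differentiableAt
  have hy'cont : Continuous y' := hdiffy'.continuous
  have hy''eq : y'' = deriv y' := funext fun t => ((hy' t).deriv).symm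
  have hy''meas : Measurable y'' := hy''eq ▸ measurable_deriv y'
  have h01 : (0:ℝ) ≤ 1 := by norm_num
  have hy''int : IntervalIntegrable y'' volume 0 1 := by
    rw [intervalIntegrable_iff_integrableOn_Ioc_of_le h01] at hy''L2 ⊢
    refine Integrable.mono' ((integrable_const 1).add hy''L2)
      hy''meas.aestronglyMeasurable.restrict ?_
    refine Filter.Eventually.of_forall fun t => ?_
    rw [Real.norm_eq_abs]
    simp only [Pi.add_apply]
    nlinarith [abs_nonneg (y'' t), sq_abs (y'' t)]
  have hxmono : ∀ j, j ≤ n → ∀ i, i ≤ j → x i ≤ x j := by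
    intro j
    induction j with
    | zero => intro _ i hi
              have : i = 0 := Nat.le_zero.mp hi
              simp [this]
    | succ m ih =>
      intro hjn i hij
      rcases Nat.eq_or_lt_of_le hij with rfl | hlt
      · exact le_rfl
      · exact (ih (by omega) i (by omega)).trans (hmono m (by omega)).le
  have hx01 : ∀ i, i ≤ n → x i ∈ Set.Icc (0:ℝ) 1 :=
    fun i hi => ⟨hx0 ▸ hxmono i hi 0 (Nat.zero_le _), hxn ▸ hxmono n le_rfl i hi⟩
  have hsub : ∀ k, k < n → Set.uIcc (x k) (x (k+1)) ⊆ Set.uIcc (0:ℝ) 1 := by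
    intro k hk
    rw [Set.uIcc_of_le (hmono k hk).le, Set.uIcc_of_le h01]
    exact Set.Icc_subset_Icc (hx01 k hk.le).1 (hx01 (k+1) hk).2
  have hint2 : ∀ k < n, IntervalIntegrable (fun t => y'' t ^ 2) volume (x k) (x (k+1)) :=
    fun k hk => hy''L2.mono_set (hsub k hk)
  have hint1 : ∀ k < n, IntervalIntegrable y'' volume (x k) (x (k+1)) :=
    fun k hk => hy''int.mono_set (hsub k hk)
  have hkey : ∀ k, k < n → ∃ ξ ∈ Set.Icc (x k) (x (k+1)),
      ∀ t ∈ Set.Ioo (x k) (x (k+1)), deriv Iy t = y' ξ := by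
    intro k hk
    by_cases hk0 : k = 0
    · subst hk0
      refine ⟨x 0, ⟨le_rfl, (hmono 0 hk).le⟩, fun t ht => ?_⟩
      have hev : Iy =ᶠ[nhds t] fun _ => y (x 1) :=
        Filter.eventuallyEq_of_mem (Ioo_mem_nhds ht.1 ht.2)
          (fun s hs => hIfirst s (Set.Ioo_subset_Icc_self hs))
      rw [hev.deriv_eq, deriv_const, hx0, hb0]
    by_cases hkn : k = n - 1
    · subst hkn
      have hn1 : n - 1 + 1 = n := by omega
      refine ⟨x n, ?_, fun t ht => ?_⟩
      · rw [hn1]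
        exact ⟨hxmono n le_rfl (n-1) (by omega), le_rfl⟩
      · rw [hn1] at ht
        have hev : Iy =ᶠ[nhds t] fun _ => y (x (n-1)) :=
          Filter.eventuallyEq_of_mem (Ioo_mem_nhds ht.1 ht.2)
            (fun s hs => hIlast s (Set.Ioo_subset_Icc_self hs))
        rw [hev.deriv_eq, deriv_const, hxn, hb1]
    · have h1k : 1 ≤ k := by omega
      have hk1 : k + 1 ≤ n - 1 := by omega
      obtain ⟨α, β, haff⟩ := hIaff k h1k hk1
      have hvk : Iy (x k) = y (x k) := hIval k h1k (by omega)
      have hvk1 : Iy (x (k+1)) = y (x (k+1)) := hIval (k+1) (by omega) hk1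
      have e1 : y (x k) = α + β * x k := by
        rw [← hvk, haff (x k) ⟨le_rfl, (hmono k hk).le⟩]
      have e2 : y (x (k+1)) = α + β * x (k+1) := by
        rw [← hvk1, haff (x (k+1)) ⟨(hmono k hk).le, le_rfl⟩]
      obtain ⟨ξ, hξmem, hξ⟩ := exists_hasDerivAt_eq_slope y y' (hmono k hk)
        hycont.continuousOn (fun s _ => hy s)
      refine ⟨ξ, Set.Ioo_subset_Icc_self hξmem, fun t ht => ?_⟩
      have hβ : y' ξ = β := by
        rw [hξ, e1, e2, div_eq_iff (ne_of_gt (sub_pos.mpr (hmono k hk)))]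
        ring
      have hev : Iy =ᶠ[nhds t] fun s => α + β * s :=
        Filter.eventuallyEq_of_mem (Ioo_mem_nhds ht.1 ht.2)
          (fun s hs => haff s (Set.Ioo_subset_Icc_self hs))
      rw [hev.deriv_eq, hβ]
      simpa using (((hasDerivAt_id t).const_mul β).const_add α).deriv
  have hmain : ∀ k, k < n →
      IntervalIntegrable (fun t => (deriv Iy t - y' t) ^ 2) volume (x k) (x (k+1)) ∧
      ∫ t in x k..x (k+1), (deriv Iy t - y' t) ^ 2 ≤
        h ^ 2 / 2 * ∫ t in x k..x (k+1), y'' t ^ 2 := by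
    intro k hk
    obtain ⟨ξ, hξI, hξd⟩ := hkey k hk
    have hab := (hmono k hk).le
    have hane : ∀ᵐ t : ℝ ∂volume, t ≠ x (k+1) := by
      refine ae_iff.mpr ?_
      have : {t : ℝ | ¬ t ≠ x (k+1)} = {x (k+1)} := by ext t; simp
      rw [this]
      exact measure_singleton _
    have haeeq : ∀ᵐ t ∂volume, t ∈ Set.Ioc (x k) (x (k+1)) →
        (deriv Iy t - y' t) ^ 2 = (y' ξ - y' t) ^ 2 := by
      filter_upwards [hane] with t ht hmem
      rw [hξd t ⟨hmem.1, lt_of_le_of_ne hmem.2 ht⟩]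
    have hginti : IntervalIntegrable (fun t => (y' ξ - y' t) ^ 2) volume (x k) (x (k+1)) :=
      ((continuous_const.sub hy'cont).pow 2).intervalIntegrable _ _
    have hfi : IntervalIntegrable (fun t => (deriv Iy t - y' t) ^ 2) volume (x k) (x (k+1)) := by
      rw [intervalIntegrable_iff_integrableOn_Ioc_of_le hab]
      refine ((intervalIntegrable_iff_integrableOn_Ioc_of_le hab).mp hginti).congr ?_
      refine ((ae_restrict_iff' measurableSet_Ioc).mpr ?_)
      filter_upwards [haeeq] with t ht hmem
      exact (ht hmem).symm
    have heq : ∫ t in x k..x (k+1), (deriv Iy t - y' t) ^ 2 =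
        ∫ t in x k..x (k+1), (y' ξ - y' t) ^ 2 := by
      refine intervalIntegral.integral_congr_ae' haeeq ?_
      have : Set.Ioc (x (k+1)) (x k) = ∅ := Set.Ioc_eq_empty (not_lt.mpr hab)
      rw [this]
      exact Filter.Eventually.of_forall fun t ht => absurd ht (Set.notMem_empty t)
    refine ⟨hfi, ?_⟩
    rw [heq]
    exact key_lemma y' y'' hy' _ _ ξ h hab hξI (hmesh k hk) (hint2 k hk) (hint1 k hk)
  have hsum1 := intervalIntegral.sum_integral_adjacent_intervals (μ := volume)
    (f := fun t => (deriv Iy t - y' t) ^ 2) (a := x) (n := n) (fun k hk => (hmain k hk).1)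
  have hsum2 := intervalIntegral.sum_integral_adjacent_intervals (μ := volume)
    (f := fun t => y'' t ^ 2) (a := x) (n := n) hint2
  rw [hx0, hxn] at hsum1 hsum2
  have hle : ∫ t in (0:ℝ)..1, (deriv Iy t - y' t) ^ 2 ≤
      h ^ 2 / 2 * ∫ t in (0:ℝ)..1, y'' t ^ 2 := by
    rw [← hsum1, ← hsum2, Finset.mul_sum]
    exact Finset.sum_le_sum fun k hk => (hmain k (Finset.mem_range.mp hk)).2
  refine (Real.sqrt_le_sqrt hle).trans ?_
  rw [show h ^ 2 / 2 = (h / Real.sqrt 2) ^ 2 by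
        rw [div_pow, Real.sq_sqrt (by norm_num : (0:ℝ) ≤ 2)],
      Real.sqrt_mul (sq_nonneg _), Real.sqrt_sq (by positivity)]
  rw [one_div, div_eq_mul_inv]
  ring_nf
  exact le_rfl
end

section
/- Let y ∈ C([0,1]) with y'' ∈ L²(0,1) and y'(0) = y'(1) = 0. Let I_h y be the modified piecewise linear interpolant (equal to y at interior nodes, constant on the first and last subintervals). Then ‖y - I_h y‖_{L²(0,1)} ≤ (1/2) h² ‖y''‖_{L²(0,1)}. -/
/-!
On a cell `[a, b]` the interpolant is affine, `p t = α + β t`, and the error `e = y - p` vanishes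
at a node of the cell, while `e' = y' - β` vanishes somewhere in the cell as well: on interior
cells by the mean value theorem, on the two boundary cells (where `p` is constant) because
`y'(0) = y'(1) = 0`. For `f` vanishing at `ξ ∈ [a, b]`, Cauchy–Schwarz gives
`f(s)² ≤ |s - ξ| ∫ₐᵇ f'²`, and integrating yields `∫ₐᵇ f² ≤ (b - a)²/2 · ∫ₐᵇ f'²`. Applied to `e`
and then to `e'` this gives `∫ₐᵇ e² ≤ (b - a)⁴/4 · ∫ₐᵇ y''²`; summing over the cells and taking
square roots proves the estimate.
-/

open MeasureTheory intervalIntegral Set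

theorem IntervalIntegrable.of_sq {g : ℝ → ℝ} {a b : ℝ} (hg : Measurable g)
    (hg2 : IntervalIntegrable (fun t => g t ^ 2) volume a b) :
    IntervalIntegrable g volume a b := by
  rw [intervalIntegrable_iff, uIoc] at hg2 ⊢
  exact ((memLp_two_iff_integrable_sq hg.aestronglyMeasurable).2 hg2).integrable one_le_two

theorem sq_intervalIntegral_le {g : ℝ → ℝ} {a b : ℝ} (hab : a ≤ b)
    (hg : IntervalIntegrable g volume a b)
    (hg2 : IntervalIntegrable (fun t => g t ^ 2) volume a b) :
    (∫ t in a..b, g t) ^ 2 ≤ (b - a) * ∫ t in a..b, g t ^ 2 := by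
  rcases hab.eq_or_lt with rfl | hlt
  · simp
  have jensen := (even_two.convexOn_pow).map_set_average_le (continuous_pow 2).continuousOn
    isClosed_univ (μ := volume) (t := Ioc a b) (by simp [hlt]) (by simp) (by simp)
    ((intervalIntegrable_iff_integrableOn_Ioc_of_le hab).1 hg)
    ((intervalIntegrable_iff_integrableOn_Ioc_of_le hab).1 hg2)
  simp only [setAverage_eq, measureReal_def, Real.volume_Ioc,
    ENNReal.toReal_ofReal (sub_nonneg.2 hab), smul_eq_mul, ← integral_of_le hab, mul_pow,
    inv_pow] at jensen
  have hL : 0 < b - a := sub_pos.2 hlt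
  calc (∫ t in a..b, g t) ^ 2 ≤ (b - a) ^ 2 * ((b - a)⁻¹ * ∫ t in a..b, g t ^ 2) :=
        (inv_mul_le_iff₀ (pow_pos hL 2)).1 jensen
    _ = (b - a) * ∫ t in a..b, g t ^ 2 := by field_simp

theorem integral_abs_sub_le {a b ξ : ℝ} (hξ : ξ ∈ Icc a b) :
    ∫ s in a..b, |s - ξ| ≤ (b - a) ^ 2 / 2 := by
  have hcont : Continuous fun s : ℝ => |s - ξ| := by fun_prop
  rw [← integral_add_adjacent_intervals (hcont.intervalIntegrable a ξ)
    (hcont.intervalIntegrable ξ b)]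
  have hleft : ∫ s in a..ξ, |s - ξ| = ∫ s in a..ξ, (ξ - s) :=
    integral_congr fun s hs => by
      rw [uIcc_of_le hξ.1] at hs
      simp only [abs_of_nonpos (sub_nonpos.2 hs.2), neg_sub]
  have hright : ∫ s in ξ..b, |s - ξ| = ∫ s in ξ..b, (s - ξ) :=
    integral_congr fun s hs => by
      rw [uIcc_of_le hξ.2] at hs
      simp only [abs_of_nonneg (sub_nonneg.2 hs.1)]
  rw [hleft, hright, integral_sub intervalIntegrable_const intervalIntegral.intervalIntegrable_id,
    integral_sub intervalIntegral.intervalIntegrable_id intervalIntegrable_const]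
  simp only [integral_id, intervalIntegral.integral_const, smul_eq_mul]
  nlinarith [mul_nonneg (sub_nonneg.2 hξ.1) (sub_nonneg.2 hξ.2)]

theorem sq_sub_le_of_hasDerivAt {f f' : ℝ → ℝ} {u v : ℝ} (huv : u ≤ v)
    (hf : ∀ t ∈ Icc u v, HasDerivAt f (f' t) t) (hf' : IntervalIntegrable f' volume u v)
    (hf'2 : IntervalIntegrable (fun t => f' t ^ 2) volume u v) :
    (f v - f u) ^ 2 ≤ (v - u) * ∫ t in u..v, f' t ^ 2 := by
  rw [← integral_eq_sub_of_hasDerivAt (by rwa [uIcc_of_le huv]) hf']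
  exact sq_intervalIntegral_le huv hf' hf'2

theorem integral_sq_le_of_hasDerivAt_of_eq_zero {f f' : ℝ → ℝ} {a b ξ : ℝ} (hξ : ξ ∈ Icc a b)
    (hf : ∀ t ∈ Icc a b, HasDerivAt f (f' t) t) (hf' : IntervalIntegrable f' volume a b)
    (hf'2 : IntervalIntegrable (fun t => f' t ^ 2) volume a b) (hfξ : f ξ = 0) :
    ∫ t in a..b, f t ^ 2 ≤ (b - a) ^ 2 / 2 * ∫ t in a..b, f' t ^ 2 := by
  have hab : a ≤ b := hξ.1.trans hξ.2
  set M := ∫ t in a..b, f' t ^ 2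
  have hM : 0 ≤ M := integral_nonneg hab fun t _ => sq_nonneg _
  have hpiece : ∀ {u v}, u ∈ Icc a b → v ∈ Icc a b → u ≤ v → (f v - f u) ^ 2 ≤ (v - u) * M := by
    intro u v hu hv huv
    have huv_sub : uIcc u v ⊆ uIcc a b := uIcc_subset_uIcc (Icc_subset_uIcc hu) (Icc_subset_uIcc hv)
    calc (f v - f u) ^ 2 ≤ (v - u) * ∫ t in u..v, f' t ^ 2 :=
          sq_sub_le_of_hasDerivAt huv (fun t ht => hf t ⟨hu.1.trans ht.1, ht.2.trans hv.2⟩)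
            (hf'.mono_set huv_sub) (hf'2.mono_set huv_sub)
      _ ≤ (v - u) * M := mul_le_mul_of_nonneg_left (integral_mono_interval hu.1 huv hv.2
            (ae_of_all _ fun t => sq_nonneg _) hf'2) (sub_nonneg.2 huv)
  have hpoint : ∀ s ∈ Icc a b, f s ^ 2 ≤ |s - ξ| * M := by
    intro s hs
    rcases le_total s ξ with hsξ | hξs
    · simpa [hfξ, abs_of_nonpos (sub_nonpos.2 hsξ)] using hpiece hs hξ hsξ
    · simpa [hfξ, abs_of_nonneg (sub_nonneg.2 hξs)] using hpiece hξ hs hξs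
  have hfc : ContinuousOn f (Icc a b) := fun t ht => (hf t ht).continuousAt.continuousWithinAt
  calc ∫ t in a..b, f t ^ 2 ≤ ∫ s in a..b, |s - ξ| * M := by
        refine integral_mono_on hab ((hfc.pow 2).intervalIntegrable_of_Icc hab) ?_ hpoint
        exact (by fun_prop : Continuous fun s : ℝ => |s - ξ| * M).intervalIntegrable _ _
    _ ≤ (b - a) ^ 2 / 2 * M := by
        rw [intervalIntegral.integral_mul_const]
        exact mul_le_mul_of_nonneg_right (integral_abs_sub_le hξ) hM

theorem integral_sq_sub_le_of_eqOn_affine {y y' y'' p : ℝ → ℝ} {a b α β c ξ : ℝ}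
    (hp : EqOn p (fun t => α + β * t) (Icc a b))
    (hy : ∀ t ∈ Icc a b, HasDerivAt y (y' t) t) (hy' : ∀ t ∈ Icc a b, HasDerivAt y' (y'' t) t)
    (hy'' : IntervalIntegrable y'' volume a b)
    (hy''2 : IntervalIntegrable (fun t => y'' t ^ 2) volume a b)
    (hc : c ∈ Icc a b) (hpc : p c = y c) (hξ : ξ ∈ Icc a b) (hy'ξ : y' ξ = β) :
    ∫ t in a..b, (y t - p t) ^ 2 ≤ (b - a) ^ 4 / 4 * ∫ t in a..b, y'' t ^ 2 := by
  have hab : a ≤ b := hc.1.trans hc.2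
  have he' : ContinuousOn (fun t => y' t - β) (Icc a b) := fun t ht =>
    ((hy' t ht).continuousAt.sub continuousAt_const).continuousWithinAt
  have hslope : ∫ t in a..b, (y' t - β) ^ 2 ≤ (b - a) ^ 2 / 2 * ∫ t in a..b, y'' t ^ 2 :=
    integral_sq_le_of_hasDerivAt_of_eq_zero hξ (fun t ht => (hy' t ht).sub_const β) hy'' hy''2
      (sub_eq_zero.2 hy'ξ)
  have hvalue : ∫ t in a..b, (y t - p t) ^ 2 ≤ (b - a) ^ 2 / 2 * ∫ t in a..b, (y' t - β) ^ 2 := by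
    have hIy : ∫ t in a..b, (y t - p t) ^ 2 = ∫ t in a..b, (y t - (α + β * t)) ^ 2 :=
      integral_congr fun t ht => by simp only [hp (uIcc_of_le hab ▸ ht)]
    rw [hIy]
    refine integral_sq_le_of_hasDerivAt_of_eq_zero (f := fun t => y t - (α + β * t)) hc
      (fun t ht => ?_)
      (he'.intervalIntegrable_of_Icc hab) ((he'.pow 2).intervalIntegrable_of_Icc hab) ?_
    · exact ((hy t ht).sub (((hasDerivAt_id t).const_mul β).const_add α)).congr_deriv (by ring)
    · rw [← hpc, hp hc]; ring
  calc ∫ t in a..b, (y t - p t) ^ 2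
      ≤ (b - a) ^ 2 / 2 * ((b - a) ^ 2 / 2 * ∫ t in a..b, y'' t ^ 2) :=
        hvalue.trans (mul_le_mul_of_nonneg_left hslope (by positivity))
    _ = (b - a) ^ 4 / 4 * ∫ t in a..b, y'' t ^ 2 := by ring

theorem exists_hasDerivAt_eq_of_eq_affine {y y' : ℝ → ℝ} {a b α β : ℝ} (hab : a < b)
    (hy : ∀ t ∈ Icc a b, HasDerivAt y (y' t) t) (ha : y a = α + β * a) (hb : y b = α + β * b) :
    ∃ ξ ∈ Icc a b, y' ξ = β := by
  obtain ⟨ξ, hξ, hslope⟩ := exists_hasDerivAt_eq_slope y y' hab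
    (fun t ht => (hy t ht).continuousAt.continuousWithinAt)
    (fun t ht => hy t (Ioo_subset_Icc_self ht))
  refine ⟨ξ, Ioo_subset_Icc_self hξ, ?_⟩
  rw [hslope, ha, hb]
  field_simp [(sub_pos.2 hab).ne']
  ring

theorem integral_le_const_mul_of_adjacent_intervals {f g : ℝ → ℝ} {x : ℕ → ℝ} {n : ℕ} {C : ℝ}
    (hf : ∀ k < n, IntervalIntegrable f volume (x k) (x (k + 1)))
    (hg : ∀ k < n, IntervalIntegrable g volume (x k) (x (k + 1)))
    (hfg : ∀ k < n, ∫ t in x k..x (k + 1), f t ≤ C * ∫ t in x k..x (k + 1), g t) :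
    ∫ t in x 0..x n, f t ≤ C * ∫ t in x 0..x n, g t := by
  rw [← sum_integral_adjacent_intervals hf, ← sum_integral_adjacent_intervals hg, Finset.mul_sum]
  exact Finset.sum_le_sum fun k hk => hfg k (Finset.mem_range.1 hk)

theorem uIcc_subset_uIcc_of_forall_lt_succ {x : ℕ → ℝ} {n : ℕ}
    (hmono : ∀ i < n, x i < x (i + 1)) {i : ℕ} (hi : i < n) :
    uIcc (x i) (x (i + 1)) ⊆ uIcc (x 0) (x n) := by
  have hxmono := (strictMonoOn_Iic_of_lt_succ hmono).monotoneOn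
  have hx_mem : ∀ j ≤ n, x j ∈ Icc (x 0) (x n) := fun j hj =>
    ⟨hxmono (Nat.zero_le n) hj (Nat.zero_le j), hxmono hj (mem_Iic.2 le_rfl) hj⟩
  exact uIcc_subset_uIcc (Icc_subset_uIcc (hx_mem i hi.le)) (Icc_subset_uIcc (hx_mem (i + 1) hi))

theorem exists_eqOn_affine_of_modified_interpolant {n : ℕ} {x : ℕ → ℝ} (hx0 : x 0 = 0)
    (hxn : x n = 1) (hmono : ∀ i < n, x i < x (i + 1)) {y y' Iy : ℝ → ℝ}
    (hy : ∀ t, HasDerivAt y (y' t) t)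
    (hb0 : y' 0 = 0) (hb1 : y' 1 = 0)
    (hIval : ∀ i, 1 ≤ i → i ≤ n - 1 → Iy (x i) = y (x i))
    (hIaff : ∀ i, 1 ≤ i → i + 1 ≤ n - 1 →
      ∃ α β : ℝ, ∀ t ∈ Icc (x i) (x (i + 1)), Iy t = α + β * t)
    (hIfirst : ∀ t ∈ Icc (x 0) (x 1), Iy t = y (x 1))
    (hIlast : ∀ t ∈ Icc (x (n - 1)) (x n), Iy t = y (x (n - 1))) {i : ℕ} (hi : i < n) :
    ∃ α β : ℝ, EqOn Iy (fun t => α + β * t) (Icc (x i) (x (i + 1))) ∧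
      (∃ c ∈ Icc (x i) (x (i + 1)), Iy c = y c) ∧ ∃ ξ ∈ Icc (x i) (x (i + 1)), y' ξ = β := by
  have hcell := hmono i hi
  rcases Nat.eq_zero_or_pos i with rfl | hi0
  · refine ⟨y (x 1), 0, fun t ht => by simp [hIfirst t ht], ⟨x 1, right_mem_Icc.2 hcell.le,
      hIfirst _ (right_mem_Icc.2 hcell.le)⟩, x 0, left_mem_Icc.2 hcell.le, by rwa [hx0]⟩
  rcases Nat.lt_or_ge (i + 1) n with hin | hin
  · obtain ⟨α, β, hIy⟩ := hIaff i hi0 (by omega)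
    have ha : y (x i) = α + β * x i := by
      rw [← hIval i hi0 (by omega), hIy _ (left_mem_Icc.2 hcell.le)]
    have hb : y (x (i + 1)) = α + β * x (i + 1) := by
      rw [← hIval (i + 1) (by omega) (by omega), hIy _ (right_mem_Icc.2 hcell.le)]
    exact ⟨α, β, hIy, ⟨x i, left_mem_Icc.2 hcell.le, by rw [ha, hIy _ (left_mem_Icc.2 hcell.le)]⟩,
      exists_hasDerivAt_eq_of_eq_affine hcell (fun t _ => hy t) ha hb⟩
  · obtain rfl : n = i + 1 := by omega
    simp only [Nat.add_sub_cancel] at hIlast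
    refine ⟨y (x i), 0, fun t ht => by simp [hIlast t ht], ⟨x i, left_mem_Icc.2 hcell.le,
      hIlast _ (left_mem_Icc.2 hcell.le)⟩, x (i + 1), right_mem_Icc.2 hcell.le, by rwa [hxn]⟩

theorem stmt_1_general
    (n : ℕ) (x : ℕ → ℝ) (hx0 : x 0 = 0) (hxn : x n = 1)
    (hmono : ∀ i < n, x i < x (i + 1)) (h : ℝ)
    (hmesh : ∀ i < n, x (i + 1) - x i ≤ h)
    (y y' y'' Iy : ℝ → ℝ)
    (hy : ∀ t, HasDerivAt y (y' t) t)
    (hy' : ∀ t, HasDerivAt y' (y'' t) t)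
    (hy''L2 : IntervalIntegrable (fun t => (y'' t) ^ 2) volume 0 1)
    (hb0 : y' 0 = 0) (hb1 : y' 1 = 0)
    (hIcont : ContinuousOn Iy (Set.Icc 0 1))
    (hIval : ∀ i, 1 ≤ i → i ≤ n - 1 → Iy (x i) = y (x i))
    (hIaff : ∀ i, 1 ≤ i → i + 1 ≤ n - 1 →
      ∃ α β : ℝ, ∀ t ∈ Set.Icc (x i) (x (i + 1)), Iy t = α + β * t)
    (hIfirst : ∀ t ∈ Set.Icc (x 0) (x 1), Iy t = y (x 1))
    (hIlast : ∀ t ∈ Set.Icc (x (n - 1)) (x n), Iy t = y (x (n - 1))) :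
    Real.sqrt (∫ t in (0:ℝ)..1, (y t - Iy t) ^ 2) ≤
      (1 / 2) * h ^ 2 * Real.sqrt (∫ t in (0:ℝ)..1, (y'' t) ^ 2) := by
  have hcell : ∀ i < n, uIcc (x i) (x (i + 1)) ⊆ uIcc 0 1 := fun i hi =>
    hx0 ▸ hxn ▸ uIcc_subset_uIcc_of_forall_lt_succ hmono hi
  have hy'' : IntervalIntegrable y'' volume 0 1 :=
    .of_sq (funext (fun t => (hy' t).deriv) ▸ measurable_deriv y') hy''L2
  have herr : IntervalIntegrable (fun t => (y t - Iy t) ^ 2) volume 0 1 :=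
    (((continuous_iff_continuousAt.2 fun t => (hy t).continuousAt).continuousOn.sub
      hIcont).pow 2).intervalIntegrable_of_Icc zero_le_one
  have hlocal : ∀ i < n, ∫ t in x i..x (i + 1), (y t - Iy t) ^ 2 ≤
      h ^ 4 / 4 * ∫ t in x i..x (i + 1), y'' t ^ 2 := by
    intro i hi
    obtain ⟨α, β, hIy, ⟨c, hc, hIc⟩, ξ, hξ, hy'ξ⟩ := exists_eqOn_affine_of_modified_interpolant
      hx0 hxn hmono hy hb0 hb1 hIval hIaff hIfirst hIlast hi
    refine (integral_sq_sub_le_of_eqOn_affine hIy (fun t _ => hy t) (fun t _ => hy' t)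
      (hy''.mono_set (hcell i hi)) (hy''L2.mono_set (hcell i hi)) hc hIc hξ hy'ξ).trans ?_
    have hM : 0 ≤ ∫ t in x i..x (i + 1), y'' t ^ 2 :=
      integral_nonneg (hmono i hi).le fun t _ => sq_nonneg _
    have hcell_pos : 0 ≤ x (i + 1) - x i := sub_nonneg.2 (hmono i hi).le
    gcongr
    exact hmesh i hi
  have htotal := integral_le_const_mul_of_adjacent_intervals
    (fun i hi => herr.mono_set (hcell i hi)) (fun i hi => hy''L2.mono_set (hcell i hi)) hlocal
  rw [hx0, hxn] at htotal
  calc Real.sqrt (∫ t in (0:ℝ)..1, (y t - Iy t) ^ 2)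
      ≤ Real.sqrt (((1 / 2) * h ^ 2) ^ 2 * ∫ t in (0:ℝ)..1, y'' t ^ 2) :=
        Real.sqrt_le_sqrt (htotal.trans_eq (by ring))
    _ = (1 / 2) * h ^ 2 * Real.sqrt (∫ t in (0:ℝ)..1, (y'' t) ^ 2) := by
      rw [Real.sqrt_mul (sq_nonneg _), Real.sqrt_sq (by positivity)]

/-- L² interpolation error estimate for the modified
piecewise linear interpolant: ‖y - I_h y‖_{L²(0,1)} ≤ (1/2) h² ‖y''‖_{L²(0,1)}. -/
theorem stmt_1
    (n : ℕ) (hn : 2 ≤ n) (x : ℕ → ℝ) (hx0 : x 0 = 0) (hxn : x n = 1)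
    (hmono : ∀ i < n, x i < x (i + 1)) (h : ℝ) (hh : 0 < h)
    (hmesh : ∀ i < n, x (i + 1) - x i ≤ h)
    (y y' y'' Iy : ℝ → ℝ)
    (hy : ∀ t, HasDerivAt y (y' t) t)
    (hy' : ∀ t, HasDerivAt y' (y'' t) t)
    (hy''L2 : IntervalIntegrable (fun t => (y'' t) ^ 2) volume 0 1)
    (hb0 : y' 0 = 0) (hb1 : y' 1 = 0)
    (hIcont : ContinuousOn Iy (Set.Icc 0 1))
    (hIval : ∀ i, 1 ≤ i → i ≤ n - 1 → Iy (x i) = y (x i))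
    (hIaff : ∀ i, 1 ≤ i → i + 1 ≤ n - 1 →
      ∃ α β : ℝ, ∀ t ∈ Set.Icc (x i) (x (i + 1)), Iy t = α + β * t)
    (hIfirst : ∀ t ∈ Set.Icc (x 0) (x 1), Iy t = y (x 1))
    (hIlast : ∀ t ∈ Set.Icc (x (n - 1)) (x n), Iy t = y (x (n - 1))) :
    Real.sqrt (∫ t in (0:ℝ)..1, (y t - Iy t) ^ 2) ≤
      (1 / 2) * h ^ 2 * Real.sqrt (∫ t in (0:ℝ)..1, (y'' t) ^ 2) :=
  stmt_1_general n x hx0 hxn hmono h hmesh y y' y'' Iy hy hy' hy''L2 hb0 hb1 hIcont hIval hIaff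
    hIfirst hIlast
end

section
/- Let y ∈ H¹(0,1) with y'(0) = y'(1) = 0, and Q_h the L² projection onto S̃_h¹(0,1) on the uniform mesh with size h. Then ‖(Q_h y)'‖_{L²(0,1)} ≤ (1 + 4√6) ‖y'‖_{L²(0,1)}. -/
/-!
Let `I_h y ∈ S̃_h¹` interpolate `y` at the interior nodes and split
`Q_h y = I_h y + (Q_h y - I_h y)`. On each element the slope of `I_h y` is the mean of `y'`, so
`‖(I_h y)'‖ ≤ ‖y'‖`. The difference lies in `S̃_h¹`, where the inverse inequality
`‖v_h'‖ ≤ √12 h⁻¹ ‖v_h‖` holds; and since `Q_h` is the orthogonal projection,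
`‖Q_h y - I_h y‖ ≤ ‖y - I_h y‖ ≤ h ‖y'‖` by a Poincaré inequality on each element.
Altogether `‖(Q_h y)'‖ ≤ (1 + √12) ‖y'‖ ≤ (1 + 4√6) ‖y'‖`.
-/

open MeasureTheory intervalIntegral

/-- Membership in the modified piecewise linear finite element space
S̃_h¹(0,1). -/
def ModPW (n : ℕ) (x : ℕ → ℝ) (f : ℝ → ℝ) : Prop :=
  ContinuousOn f (Set.Icc 0 1) ∧
  (∀ t ∈ Set.Icc (x 0) (x 1), f t = f (x 1)) ∧
  (∀ t ∈ Set.Icc (x (n - 1)) (x n), f t = f (x (n - 1))) ∧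
  (∀ i, 1 ≤ i → i + 1 ≤ n - 1 →
    ∃ α β : ℝ, ∀ t ∈ Set.Icc (x i) (x (i + 1)), f t = α + β * t)

open Set Filter Topology

section IntervalIntegrals

variable {g : ℝ → ℝ} {a b : ℝ}

lemma intervalIntegrable_of_sq (hg : AEStronglyMeasurable g)
    (hsq : IntervalIntegrable (fun t => g t ^ 2) volume a b) :
    IntervalIntegrable g volume a b :=
  ⟨((memLp_two_iff_integrable_sq hg.restrict).2 hsq.1).integrable one_le_two,
   ((memLp_two_iff_integrable_sq hg.restrict).2 hsq.2).integrable one_le_two⟩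

lemma IntervalIntegrable.sub_const_sq (hg : IntervalIntegrable g volume a b)
    (hsq : IntervalIntegrable (fun t => g t ^ 2) volume a b) (c : ℝ) :
    IntervalIntegrable (fun t => (g t - c) ^ 2) volume a b := by
  have hexp : (fun t => (g t - c) ^ 2) = fun t => g t ^ 2 - 2 * c * g t + c ^ 2 := by
    funext t; ring
  rw [hexp]
  exact (hsq.sub (hg.const_mul _)).add intervalIntegrable_const

lemma integral_sub_mean_sq {c : ℝ} (hg : IntervalIntegrable g volume a b)
    (hsq : IntervalIntegrable (fun t => g t ^ 2) volume a b)
    (hmean : ∫ t in a..b, g t = c * (b - a)) :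
    ∫ t in a..b, (g t - c) ^ 2 = (∫ t in a..b, g t ^ 2) - c ^ 2 * (b - a) := by
  have hexp : (fun t => (g t - c) ^ 2) = fun t => g t ^ 2 - 2 * c * g t + c ^ 2 := by
    funext t; ring
  rw [hexp, integral_add (hsq.sub (hg.const_mul _)) intervalIntegrable_const,
    integral_sub hsq (hg.const_mul _), intervalIntegral.integral_const_mul, hmean,
    intervalIntegral.integral_const, smul_eq_mul]
  ring

lemma integral_sub_slope_sq {y y' : ℝ → ℝ} (hab : a ≤ b)
    (hy : ∀ t ∈ Icc a b, HasDerivAt y (y' t) t) (hy' : IntervalIntegrable y' volume a b)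
    (hy'sq : IntervalIntegrable (fun t => y' t ^ 2) volume a b) :
    ∫ t in a..b, (y' t - slope y a b) ^ 2 =
      (∫ t in a..b, y' t ^ 2) - slope y a b ^ 2 * (b - a) := by
  refine integral_sub_mean_sq hy' hy'sq ?_
  rw [integral_eq_sub_of_hasDerivAt (fun t ht => hy t (uIcc_of_le hab ▸ ht)) hy', mul_comm,
    ← smul_eq_mul, sub_smul_slope, vsub_eq_sub]

lemma sq_integral_le_mul_integral_sq (hab : a ≤ b) (hg : IntervalIntegrable g volume a b)
    (hsq : IntervalIntegrable (fun t => g t ^ 2) volume a b) :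
    (∫ t in a..b, g t) ^ 2 ≤ (b - a) * ∫ t in a..b, g t ^ 2 := by
  rcases hab.eq_or_lt with rfl | hab
  · simp
  set c := (∫ t in a..b, g t) / (b - a)
  have hmean : ∫ t in a..b, g t = c * (b - a) := by simp only [c]; field_simp
  have hvar := integral_sub_mean_sq hg hsq hmean
  have hnn : 0 ≤ ∫ t in a..b, (g t - c) ^ 2 := integral_nonneg hab.le fun t _ => sq_nonneg _
  rw [hmean]
  nlinarith [sub_pos.2 hab]

lemma sq_integral_le_of_mem_Icc {u v : ℝ} (hu : u ∈ Icc a b) (hv : v ∈ Icc a b)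
    (hg : IntervalIntegrable g volume a b)
    (hsq : IntervalIntegrable (fun t => g t ^ 2) volume a b) :
    (∫ t in u..v, g t) ^ 2 ≤ (b - a) * ∫ t in a..b, g t ^ 2 := by
  wlog huv : u ≤ v generalizing u v
  · rw [integral_symm, neg_sq]
    exact this hv hu (le_of_not_ge huv)
  have hsub : uIcc u v ⊆ uIcc a b := uIcc_subset_uIcc (mem_uIcc_of_le hu.1 hu.2)
    (mem_uIcc_of_le hv.1 hv.2)
  calc (∫ t in u..v, g t) ^ 2 ≤ (v - u) * ∫ t in u..v, g t ^ 2 :=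
        sq_integral_le_mul_integral_sq huv (hg.mono_set hsub) (hsq.mono_set hsub)
    _ ≤ (b - a) * ∫ t in a..b, g t ^ 2 := by
        refine mul_le_mul (by linarith [hu.1, hv.2]) ?_
          (integral_nonneg huv fun t _ => sq_nonneg _) (by linarith [hu.1, hv.2])
        exact integral_mono_interval hu.1 huv hv.2
          (Filter.Eventually.of_forall fun t => sq_nonneg _) hsq

lemma integral_sq_le_of_hasDerivAt_of_eq_zero_s12 {e e' : ℝ → ℝ} {c : ℝ} (hab : a ≤ b)
    (hc : c ∈ Icc a b) (he : ∀ t ∈ Icc a b, HasDerivAt e (e' t) t) (hec : e c = 0)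
    (he' : IntervalIntegrable e' volume a b)
    (he'sq : IntervalIntegrable (fun t => e' t ^ 2) volume a b) :
    ∫ t in a..b, e t ^ 2 ≤ (b - a) ^ 2 * ∫ t in a..b, e' t ^ 2 := by
  have hpt : ∀ t ∈ Icc a b, e t ^ 2 ≤ (b - a) * ∫ t in a..b, e' t ^ 2 := by
    intro t ht
    have hsub : uIcc c t ⊆ uIcc a b := uIcc_subset_uIcc (mem_uIcc_of_le hc.1 hc.2)
      (mem_uIcc_of_le ht.1 ht.2)
    have hftc : ∫ s in c..t, e' s = e t - e c := integral_eq_sub_of_hasDerivAt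
      (fun s hs => he s (by simpa [uIcc_of_le hab] using hsub hs)) (he'.mono_set hsub)
    rw [← sub_zero (e t), ← hec, ← hftc]
    exact sq_integral_le_of_mem_Icc hc ht he' he'sq
  have hcont : ContinuousOn (fun t => e t ^ 2) (uIcc a b) := by
    rw [uIcc_of_le hab]
    exact fun t ht => ((he t ht).continuousAt.continuousWithinAt).pow 2
  calc ∫ t in a..b, e t ^ 2 ≤ ∫ _ in a..b, (b - a) * ∫ t in a..b, e' t ^ 2 :=
        integral_mono_on hab hcont.intervalIntegrable intervalIntegrable_const hpt
    _ = (b - a) ^ 2 * ∫ t in a..b, e' t ^ 2 := by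
        rw [intervalIntegral.integral_const, smul_eq_mul]
        ring

lemma sq_mul_cube_le_twelve_mul_integral_sq (p s : ℝ) (hab : a ≤ b) :
    s ^ 2 * (b - a) ^ 3 ≤ 12 * ∫ t in a..b, (p + s * (t - a)) ^ 2 := by
  -- the difference of the two sides is `3 (b - a) (2 p + s (b - a))²`
  have hint : ∫ t in a..b, (p + s * (t - a)) ^ 2
      = p ^ 2 * (b - a) + p * s * (b - a) ^ 2 + s ^ 2 * (b - a) ^ 3 / 3 := by
    rw [intervalIntegral.integral_comp_sub_right (fun t => (p + s * t) ^ 2)]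
    have hexp : (fun t => (p + s * t) ^ 2) = fun t => p ^ 2 + 2 * p * s * t + s ^ 2 * t ^ 2 := by
      funext t; ring
    rw [hexp, sub_self, intervalIntegral.integral_add, intervalIntegral.integral_add,
      intervalIntegral.integral_const, intervalIntegral.integral_const_mul,
      intervalIntegral.integral_const_mul, integral_pow, integral_id, smul_eq_mul]
    · ring
    all_goals exact Continuous.intervalIntegrable (by fun_prop) _ _
  rw [hint]
  nlinarith [mul_nonneg (sub_nonneg.2 hab) (sq_nonneg (2 * p + s * (b - a)))]

lemma integral_sq_sub_le_of_orthogonal {y q v : ℝ → ℝ} (hab : a ≤ b)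
    (hy : ContinuousOn y (Icc a b)) (hq : ContinuousOn q (Icc a b))
    (hv : ContinuousOn v (Icc a b))
    (horth : ∫ t in a..b, q t * (q t - v t) = ∫ t in a..b, y t * (q t - v t)) :
    ∫ t in a..b, (q t - v t) ^ 2 ≤ ∫ t in a..b, (y t - v t) ^ 2 := by
  have hint : ∀ {u : ℝ → ℝ}, ContinuousOn u (Icc a b) → IntervalIntegrable u volume a b :=
    fun hu => hu.intervalIntegrable_of_Icc hab
  have hpyth : ∫ t in a..b, (y t - v t) ^ 2 =
      (∫ t in a..b, (y t - q t) ^ 2) + ∫ t in a..b, (q t - v t) ^ 2 := by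
    have hexp : ∀ t, (y t - v t) ^ 2 = (y t - q t) ^ 2 + (q t - v t) ^ 2 +
        2 * (y t * (q t - v t) - q t * (q t - v t)) := fun t => by ring
    simp_rw [hexp]
    rw [intervalIntegral.integral_add, intervalIntegral.integral_add,
      intervalIntegral.integral_const_mul, intervalIntegral.integral_sub, horth,
      sub_self, mul_zero, add_zero]
    all_goals exact hint (by fun_prop)
  rw [hpyth]
  exact le_add_of_nonneg_left (integral_nonneg hab fun t _ => sq_nonneg _)

end IntervalIntegrals

structure IsUnitIntervalMesh (n : ℕ) (x : ℕ → ℝ) : Prop where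
  strictMono : StrictMono x
  zero : x 0 = 0
  last : x n = 1

namespace IsUnitIntervalMesh

variable {n : ℕ} {x : ℕ → ℝ}

lemma lt_succ (hx : IsUnitIntervalMesh n x) (j : ℕ) : x j < x (j + 1) :=
  hx.strictMono j.lt_succ_self

lemma mem_Icc (hx : IsUnitIntervalMesh n x) {j : ℕ} (hj : j ≤ n) : x j ∈ Icc (0 : ℝ) 1 :=
  ⟨hx.zero ▸ hx.strictMono.monotone j.zero_le, hx.last ▸ hx.strictMono.monotone hj⟩

lemma Icc_subset (hx : IsUnitIntervalMesh n x) {j : ℕ} (hj : j < n) :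
    Icc (x j) (x (j + 1)) ⊆ Icc 0 1 :=
  Icc_subset_Icc (hx.mem_Icc hj.le).1 (hx.mem_Icc hj).2

lemma uIcc_subset (hx : IsUnitIntervalMesh n x) {j : ℕ} (hj : j < n) :
    uIcc (x j) (x (j + 1)) ⊆ uIcc 0 1 := by
  rw [uIcc_of_le (hx.lt_succ j).le, uIcc_of_le zero_le_one]
  exact hx.Icc_subset hj

lemma integral_eq_sum (hx : IsUnitIntervalMesh n x) {g : ℝ → ℝ}
    (hg : IntervalIntegrable g volume 0 1) :
    ∫ t in (0 : ℝ)..1, g t = ∑ j ∈ Finset.range n, ∫ t in x j..x (j + 1), g t := by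
  have := sum_integral_adjacent_intervals (a := x) (n := n) fun j hj =>
    hg.mono_set (hx.uIcc_subset hj)
  rwa [hx.zero, hx.last, eq_comm] at this

lemma pos (hx : IsUnitIntervalMesh n x) : 0 < n :=
  Nat.pos_of_ne_zero fun hn => zero_ne_one (hx.zero.symm.trans (hn ▸ hx.last))

end IsUnitIntervalMesh

lemma isUnitIntervalMesh_uniform {n : ℕ} (hn : 0 < n) :
    IsUnitIntervalMesh n fun i => (i : ℝ) * (1 / n) where
  strictMono _ _ hij := mul_lt_mul_of_pos_right (Nat.cast_lt.2 hij) (by positivity)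
  zero := by simp
  last := by field_simp

lemma sqrt_sum_sq_add_le {ι : Type*} (s : Finset ι) (a b : ι → ℝ) :
    √(∑ i ∈ s, (a i + b i) ^ 2) ≤ √(∑ i ∈ s, a i ^ 2) + √(∑ i ∈ s, b i ^ 2) := by
  have := Real.Lp_add_le s a b one_le_two
  simpa [Real.sqrt_eq_rpow] using this

lemma modPW_of_eq_on_element {n : ℕ} {x : ℕ → ℝ} {f : ℝ → ℝ} (hn : 0 < n)
    (hcont : ContinuousOn f (Icc 0 1)) (σ : ℕ → ℝ) (hσ0 : σ 0 = 0) (hσn : σ (n - 1) = 0)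
    (hf : ∀ j < n, ∀ t ∈ Icc (x j) (x (j + 1)), f t = f (x j) + σ j * (t - x j)) :
    ModPW n x f := by
  refine ⟨hcont, fun t ht => ?_, fun t ht => ?_, fun i hi1 hi2 =>
    ⟨f (x i) - σ i * x i, σ i, fun t ht => ?_⟩⟩
  · rw [hf 0 hn t ht, hf 0 hn (x 1) ⟨ht.1.trans ht.2, le_rfl⟩, hσ0]
    ring
  · have hlast := hf (n - 1) (by omega)
    rw [Nat.sub_add_cancel hn] at hlast
    rw [hlast t ht, hσn]
    ring
  · rw [hf i (by omega) t ht]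
    ring

namespace ModPW

variable {n : ℕ} {x : ℕ → ℝ} {f g : ℝ → ℝ}

lemma eq_on_element (hf : ModPW n x f) {j : ℕ} (hj : j < n) {t : ℝ}
    (ht : t ∈ Icc (x j) (x (j + 1))) :
    f t = f (x j) + slope f (x j) (x (j + 1)) * (t - x j) := by
  have hl : x j ∈ Icc (x j) (x (j + 1)) := ⟨le_rfl, ht.1.trans ht.2⟩
  have hr : x (j + 1) ∈ Icc (x j) (x (j + 1)) := ⟨ht.1.trans ht.2, le_rfl⟩
  rcases Nat.eq_zero_or_pos j with rfl | hj0
  · simp only [zero_add] at ht hl hr ⊢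
    rw [slope_def_field, hf.2.1 t ht, hf.2.1 _ hl, sub_self, zero_div, zero_mul, add_zero]
  by_cases hlast : j + 1 = n
  · subst hlast
    have hconst := hf.2.2.1
    rw [Nat.add_sub_cancel] at hconst
    rw [slope_def_field, hconst t ht, hconst _ hr, sub_self, zero_div, zero_mul, add_zero]
  obtain ⟨α, β, hαβ⟩ := hf.2.2.2 j hj0 (by omega)
  rw [slope_def_field, hαβ t ht, hαβ _ hl, hαβ _ hr]
  rcases (ht.1.trans ht.2).eq_or_lt with hx | hx
  · obtain rfl : t = x j := le_antisymm (hx ▸ ht.2) ht.1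
    ring
  · field_simp [(sub_pos.2 hx).ne']
    ring

lemma sub (hf : ModPW n x f) (hg : ModPW n x g) : ModPW n x (f - g) := by
  refine ⟨hf.1.sub hg.1, fun t ht => ?_, fun t ht => ?_, fun i hi1 hi2 => ?_⟩
  · simp only [Pi.sub_apply, hf.2.1 t ht, hg.2.1 t ht]
  · simp only [Pi.sub_apply, hf.2.2.1 t ht, hg.2.2.1 t ht]
  · obtain ⟨α, β, hf'⟩ := hf.2.2.2 i hi1 hi2
    obtain ⟨γ, δ, hg'⟩ := hg.2.2.2 i hi1 hi2
    exact ⟨α - γ, β - δ, fun t ht => by simp only [Pi.sub_apply, hf' t ht, hg' t ht]; ring⟩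

lemma deriv_eq (hf : ModPW n x f) {j : ℕ} (hj : j < n) {t : ℝ}
    (ht : t ∈ Ioo (x j) (x (j + 1))) : deriv f t = slope f (x j) (x (j + 1)) := by
  have hev : f =ᶠ[𝓝 t] fun u => f (x j) + slope f (x j) (x (j + 1)) * (u - x j) :=
    eventuallyEq_of_mem (Ioo_mem_nhds ht.1 ht.2) fun u hu =>
      hf.eq_on_element hj (Ioo_subset_Icc_self hu)
  rw [hev.deriv_eq]
  simp

lemma integral_deriv_sq_element (hf : ModPW n x f) {j : ℕ} (hj : j < n)
    (hx : x j ≤ x (j + 1)) :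
    IntervalIntegrable (fun t => deriv f t ^ 2) volume (x j) (x (j + 1)) ∧
      ∫ t in x j..x (j + 1), deriv f t ^ 2 =
        slope f (x j) (x (j + 1)) ^ 2 * (x (j + 1) - x j) := by
  have heq : EqOn (fun t => deriv f t ^ 2) (fun _ => slope f (x j) (x (j + 1)) ^ 2)
      (Ioo (x j) (x (j + 1))) := fun t ht => by simp only [hf.deriv_eq hj ht]
  refine ⟨(intervalIntegrable_congr_uIoo (uIoo_of_le hx ▸ heq)).2 intervalIntegrable_const, ?_⟩
  rw [integral_congr_Ioo_of_le hx heq, intervalIntegral.integral_const, smul_eq_mul, mul_comm]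

lemma integral_deriv_sq (hf : ModPW n x f) (hx : IsUnitIntervalMesh n x) :
    ∫ t in (0 : ℝ)..1, deriv f t ^ 2 =
      ∑ j ∈ Finset.range n, slope f (x j) (x (j + 1)) ^ 2 * (x (j + 1) - x j) := by
  have := sum_integral_adjacent_intervals (a := x) (n := n) fun j hj =>
    (hf.integral_deriv_sq_element hj (hx.lt_succ j).le).1
  rw [hx.zero, hx.last] at this
  rw [← this]
  exact Finset.sum_congr rfl fun j hj =>
    (hf.integral_deriv_sq_element (Finset.mem_range.1 hj) (hx.lt_succ j).le).2

lemma sqrt_integral_deriv_sq_le (hf : ModPW n x f) (hg : ModPW n x g)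
    (hx : IsUnitIntervalMesh n x) :
    √(∫ t in (0 : ℝ)..1, deriv f t ^ 2) ≤
      √(∫ t in (0 : ℝ)..1, deriv g t ^ 2) + √(∫ t in (0 : ℝ)..1, deriv (f - g) t ^ 2) := by
  rw [hf.integral_deriv_sq hx, hg.integral_deriv_sq hx, (hf.sub hg).integral_deriv_sq hx]
  have hsq : ∀ (u : ℝ → ℝ) (j : ℕ), slope u (x j) (x (j + 1)) ^ 2 * (x (j + 1) - x j) =
      (slope u (x j) (x (j + 1)) * √(x (j + 1) - x j)) ^ 2 := fun u j => by
    rw [mul_pow, Real.sq_sqrt (sub_nonneg.2 (hx.lt_succ j).le)]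
  have hadd : ∀ j, slope f (x j) (x (j + 1)) =
      slope g (x j) (x (j + 1)) + slope (f - g) (x j) (x (j + 1)) := fun j => by
    simp only [slope_def_field, Pi.sub_apply]
    ring
  simp only [hsq]
  simp only [hadd, add_mul]
  exact sqrt_sum_sq_add_le _ _ _

lemma sq_slope_mul_le_element (hf : ModPW n x f) {j : ℕ} (hj : j < n) (hx : x j < x (j + 1)) :
    slope f (x j) (x (j + 1)) ^ 2 * (x (j + 1) - x j) ≤
      12 / (x (j + 1) - x j) ^ 2 * ∫ t in x j..x (j + 1), f t ^ 2 := by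
  have h := sq_mul_cube_le_twelve_mul_integral_sq (f (x j)) (slope f (x j) (x (j + 1))) hx.le
  have heq : ∫ t in x j..x (j + 1), f t ^ 2 =
      ∫ t in x j..x (j + 1), (f (x j) + slope f (x j) (x (j + 1)) * (t - x j)) ^ 2 :=
    integral_congr fun t ht => by
      rw [uIcc_of_le hx.le] at ht
      rw [← hf.eq_on_element hj ht]
  rw [heq, div_mul_eq_mul_div, le_div_iff₀ (by nlinarith)]
  linarith

lemma integral_deriv_sq_le (hf : ModPW n x f) (hx : IsUnitIntervalMesh n x) {h : ℝ}
    (hh : 0 < h) (hstep : ∀ j < n, h ≤ x (j + 1) - x j) :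
    ∫ t in (0 : ℝ)..1, deriv f t ^ 2 ≤ 12 / h ^ 2 * ∫ t in (0 : ℝ)..1, f t ^ 2 := by
  have hf2 : IntervalIntegrable (fun t => f t ^ 2) volume 0 1 :=
    (hf.1.pow 2).intervalIntegrable_of_Icc zero_le_one
  rw [hf.integral_deriv_sq hx, hx.integral_eq_sum hf2, Finset.mul_sum]
  refine Finset.sum_le_sum fun j hj => ?_
  have hj := Finset.mem_range.1 hj
  refine (hf.sq_slope_mul_le_element hj (hx.lt_succ j)).trans ?_
  gcongr
  · exact integral_nonneg (hx.lt_succ j).le fun t _ => sq_nonneg _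
  · exact hstep j hj

end ModPW

def ramp (a b t : ℝ) : ℝ := max a (min t b) - a

lemma ramp_eq_of_mem_Icc {x : ℕ → ℝ} (hx : Monotone x) (i : ℕ) {j : ℕ} {t : ℝ}
    (ht : t ∈ Icc (x j) (x (j + 1))) :
    ramp (x i) (x (i + 1)) t = ramp (x i) (x (i + 1)) (x j) + if i = j then t - x j else 0 := by
  unfold ramp
  rcases lt_trichotomy i j with hij | rfl | hij
  · have hle : x (i + 1) ≤ x j := hx hij
    rw [if_neg hij.ne, min_eq_right (hle.trans ht.1), min_eq_right hle]
    ring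
  · rw [if_pos rfl, min_eq_left ht.2, max_eq_right ht.1, min_eq_left (ht.1.trans ht.2), max_self]
    ring
  · have hle : x (j + 1) ≤ x i := hx hij
    rw [if_neg hij.ne', max_eq_left ((min_le_left _ _).trans (ht.2.trans hle)),
      max_eq_left ((min_le_left _ _).trans ((hx j.le_succ).trans hle))]
    ring

section Interpolant

variable {n : ℕ} {x : ℕ → ℝ} {y y' : ℝ → ℝ}

noncomputable def interpolantSlope (n : ℕ) (x : ℕ → ℝ) (y : ℝ → ℝ) (j : ℕ) : ℝ :=
  if 0 < j ∧ j + 1 < n then slope y (x j) (x (j + 1)) else 0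

/-- The interpolant `I_h y ∈ S̃_h¹`: it interpolates `y` at the nodes `x 1, …, x (n - 1)`. -/
noncomputable def interpolant (n : ℕ) (x : ℕ → ℝ) (y : ℝ → ℝ) (t : ℝ) : ℝ :=
  y (x 1) + ∑ i ∈ Finset.range n, interpolantSlope n x y i * ramp (x i) (x (i + 1)) t

lemma interpolant_eq_on_element (hx : Monotone x) {j : ℕ} {t : ℝ}
    (ht : t ∈ Icc (x j) (x (j + 1))) :
    interpolant n x y t = interpolant n x y (x j) + interpolantSlope n x y j * (t - x j) := by
  simp only [interpolant, ramp_eq_of_mem_Icc hx _ ht, mul_add, Finset.sum_add_distrib, mul_ite,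
    mul_zero, Finset.sum_ite_eq', Finset.mem_range]
  split_ifs with hj
  · ring
  · rw [interpolantSlope, if_neg (by omega)]
    ring

lemma interpolant_apply_one (hx : Monotone x) : interpolant n x y (x 1) = y (x 1) := by
  rw [interpolant, add_eq_left]
  refine Finset.sum_eq_zero fun i _ => ?_
  rcases Nat.eq_zero_or_pos i with rfl | hi
  · simp [interpolantSlope]
  · rw [ramp, max_eq_left ((min_le_left _ _).trans (hx hi)), sub_self, mul_zero]

lemma interpolant_apply_node (hx : StrictMono x) {j : ℕ} (hj1 : 1 ≤ j) (hjn : j < n) :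
    interpolant n x y (x j) = y (x j) := by
  induction j, hj1 using Nat.le_induction with
  | base => exact interpolant_apply_one hx.monotone
  | succ j hj ih =>
    rw [interpolant_eq_on_element hx.monotone ⟨(hx j.lt_succ_self).le, le_rfl⟩, ih (by omega),
      interpolantSlope, if_pos ⟨hj, hjn⟩, slope_def_field,
      div_mul_cancel₀ _ (sub_ne_zero.2 (hx j.lt_succ_self).ne')]
    ring

lemma slope_interpolant (hx : StrictMono x) (j : ℕ) :
    slope (interpolant n x y) (x j) (x (j + 1)) = interpolantSlope n x y j := by
  have hlt := hx j.lt_succ_self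
  rw [slope_def_field, interpolant_eq_on_element hx.monotone ⟨hlt.le, le_rfl⟩ (t := x (j + 1))]
  field_simp [(sub_pos.2 hlt).ne']
  ring

lemma modPW_interpolant (hn : 0 < n) (hx : Monotone x) : ModPW n x (interpolant n x y) :=
  modPW_of_eq_on_element hn
    (show Continuous (interpolant n x y) by unfold interpolant ramp; fun_prop).continuousOn
    (interpolantSlope n x y) (by simp [interpolantSlope]) (by simp [interpolantSlope]; omega)
    fun _ _ _ ht => interpolant_eq_on_element hx ht

lemma sq_interpolantSlope_mul_le {j : ℕ} (hx : x j ≤ x (j + 1))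
    (hy : ∀ t ∈ Icc (x j) (x (j + 1)), HasDerivAt y (y' t) t)
    (hy' : IntervalIntegrable y' volume (x j) (x (j + 1)))
    (hy'sq : IntervalIntegrable (fun t => y' t ^ 2) volume (x j) (x (j + 1))) :
    interpolantSlope n x y j ^ 2 * (x (j + 1) - x j) ≤ ∫ t in x j..x (j + 1), y' t ^ 2 := by
  unfold interpolantSlope
  split_ifs
  · have hvar := integral_sub_slope_sq hx hy hy' hy'sq
    linarith [integral_nonneg (μ := volume) hx fun t _ =>
      sq_nonneg (y' t - slope y (x j) (x (j + 1)))]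
  · simpa using integral_nonneg hx fun t _ => sq_nonneg (y' t)

lemma integral_sub_interpolantSlope_sq_le {j : ℕ} (hx : x j ≤ x (j + 1))
    (hy : ∀ t ∈ Icc (x j) (x (j + 1)), HasDerivAt y (y' t) t)
    (hy' : IntervalIntegrable y' volume (x j) (x (j + 1)))
    (hy'sq : IntervalIntegrable (fun t => y' t ^ 2) volume (x j) (x (j + 1))) :
    ∫ t in x j..x (j + 1), (y' t - interpolantSlope n x y j) ^ 2 ≤
      ∫ t in x j..x (j + 1), y' t ^ 2 := by
  unfold interpolantSlope
  split_ifs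
  · rw [integral_sub_slope_sq hx hy hy' hy'sq]
    nlinarith [sq_nonneg (slope y (x j) (x (j + 1))), sub_nonneg.2 hx]
  · simp

lemma exists_interpolant_eq_on_element (hx : StrictMono x) {j : ℕ} (hj : j < n) :
    ∃ c ∈ Icc (x j) (x (j + 1)), ∀ t ∈ Icc (x j) (x (j + 1)),
      interpolant n x y t = y c + interpolantSlope n x y j * (t - c) := by
  rcases Nat.eq_zero_or_pos j with rfl | hj0
  · have hσ : interpolantSlope n x y 0 = 0 := by simp [interpolantSlope]
    have hx1 : x 1 ∈ Icc (x 0) (x (0 + 1)) := ⟨(hx zero_lt_one).le, le_rfl⟩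
    refine ⟨x 1, hx1, fun t ht => ?_⟩
    rw [interpolant_eq_on_element hx.monotone ht,
      ← interpolant_apply_one (n := n) (y := y) hx.monotone,
      interpolant_eq_on_element hx.monotone hx1, hσ]
    ring
  · exact ⟨x j, ⟨le_rfl, (hx j.lt_succ_self).le⟩, fun t ht => by
      rw [interpolant_eq_on_element hx.monotone ht, interpolant_apply_node hx hj0 hj]⟩

lemma integral_sub_interpolant_sq_le_element (hx : StrictMono x) {j : ℕ} (hj : j < n)
    (hy : ∀ t ∈ Icc (x j) (x (j + 1)), HasDerivAt y (y' t) t)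
    (hy' : IntervalIntegrable y' volume (x j) (x (j + 1)))
    (hy'sq : IntervalIntegrable (fun t => y' t ^ 2) volume (x j) (x (j + 1))) :
    ∫ t in x j..x (j + 1), (y t - interpolant n x y t) ^ 2 ≤
      (x (j + 1) - x j) ^ 2 * ∫ t in x j..x (j + 1), y' t ^ 2 := by
  have hle := (hx j.lt_succ_self).le
  obtain ⟨c, hc, hI⟩ := exists_interpolant_eq_on_element (y := y) hx hj
  set σ := interpolantSlope n x y j
  have herr : ∀ t ∈ Icc (x j) (x (j + 1)),
      HasDerivAt (fun t => y t - (y c + σ * (t - c))) (y' t - σ) t := fun t ht =>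
    ((hy t ht).sub ((((hasDerivAt_id' t).sub_const c).const_mul σ).const_add (y c))).congr_deriv
      (by ring)
  calc ∫ t in x j..x (j + 1), (y t - interpolant n x y t) ^ 2
      = ∫ t in x j..x (j + 1), (y t - (y c + σ * (t - c))) ^ 2 :=
        integral_congr fun t ht => by rw [hI t (uIcc_of_le hle ▸ ht)]
    _ ≤ (x (j + 1) - x j) ^ 2 * ∫ t in x j..x (j + 1), (y' t - σ) ^ 2 :=
        integral_sq_le_of_hasDerivAt_of_eq_zero_s12 hle hc herr (by ring)
          (hy'.sub intervalIntegrable_const) (hy'.sub_const_sq hy'sq σ)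
    _ ≤ (x (j + 1) - x j) ^ 2 * ∫ t in x j..x (j + 1), y' t ^ 2 := by
        gcongr
        exact integral_sub_interpolantSlope_sq_le hle hy hy' hy'sq

lemma integral_sub_interpolant_sq_le (hx : IsUnitIntervalMesh n x) {h : ℝ}
    (hstep : ∀ j < n, x (j + 1) - x j ≤ h) (hy : ∀ t ∈ Icc 0 1, HasDerivAt y (y' t) t)
    (hy' : IntervalIntegrable y' volume 0 1)
    (hy'sq : IntervalIntegrable (fun t => y' t ^ 2) volume 0 1) :
    ∫ t in (0 : ℝ)..1, (y t - interpolant n x y t) ^ 2 ≤ h ^ 2 * ∫ t in (0 : ℝ)..1, y' t ^ 2 := by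
  have hcont : ContinuousOn (fun t => (y t - interpolant n x y t) ^ 2) (Icc 0 1) :=
    ((continuousOn_of_forall_continuousAt fun t ht => (hy t ht).continuousAt).sub
      (modPW_interpolant hx.pos hx.strictMono.monotone).1).pow 2
  rw [hx.integral_eq_sum (hcont.intervalIntegrable_of_Icc zero_le_one),
    hx.integral_eq_sum hy'sq, Finset.mul_sum]
  refine Finset.sum_le_sum fun j hj => ?_
  have hj := Finset.mem_range.1 hj
  refine (integral_sub_interpolant_sq_le_element hx.strictMono hj
    (fun t ht => hy t (hx.Icc_subset hj ht)) (hy'.mono_set (hx.uIcc_subset hj))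
    (hy'sq.mono_set (hx.uIcc_subset hj))).trans ?_
  gcongr
  · exact integral_nonneg (hx.lt_succ j).le fun t _ => sq_nonneg _
  · exact (sub_pos.2 (hx.lt_succ j)).le
  · exact hstep j hj

lemma integral_deriv_interpolant_sq_le (hx : IsUnitIntervalMesh n x)
    (hy : ∀ t ∈ Icc 0 1, HasDerivAt y (y' t) t) (hy' : IntervalIntegrable y' volume 0 1)
    (hy'sq : IntervalIntegrable (fun t => y' t ^ 2) volume 0 1) :
    ∫ t in (0 : ℝ)..1, deriv (interpolant n x y) t ^ 2 ≤ ∫ t in (0 : ℝ)..1, y' t ^ 2 := by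
  rw [(modPW_interpolant hx.pos hx.strictMono.monotone).integral_deriv_sq hx,
    hx.integral_eq_sum hy'sq]
  refine Finset.sum_le_sum fun j hj => ?_
  have hj := Finset.mem_range.1 hj
  rw [slope_interpolant hx.strictMono]
  exact sq_interpolantSlope_mul_le (hx.lt_succ j).le (fun t ht => hy t (hx.Icc_subset hj ht))
    (hy'.mono_set (hx.uIcc_subset hj)) (hy'sq.mono_set (hx.uIcc_subset hj))

lemma sqrt_integral_deriv_sq_le_of_orthogonal {Q : ℝ → ℝ} (hx : IsUnitIntervalMesh n x) {h : ℝ}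
    (hstep : ∀ j < n, x (j + 1) - x j = h) (hy : ∀ t ∈ Icc 0 1, HasDerivAt y (y' t) t)
    (hy' : IntervalIntegrable y' volume 0 1)
    (hy'sq : IntervalIntegrable (fun t => y' t ^ 2) volume 0 1) (hQ : ModPW n x Q)
    (hproj : ∀ v : ℝ → ℝ, ModPW n x v →
      ∫ t in (0 : ℝ)..1, Q t * v t = ∫ t in (0 : ℝ)..1, y t * v t) :
    √(∫ t in (0 : ℝ)..1, deriv Q t ^ 2) ≤ (1 + √12) * √(∫ t in (0 : ℝ)..1, y' t ^ 2) := by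
  have hh : 0 < h := hstep 0 hx.pos ▸ sub_pos.2 (hx.lt_succ 0)
  set I := interpolant n x y
  have hI : ModPW n x I := modPW_interpolant hx.pos hx.strictMono.monotone
  set A := ∫ t in (0 : ℝ)..1, y' t ^ 2
  have hIA : ∫ t in (0 : ℝ)..1, deriv I t ^ 2 ≤ A :=
    integral_deriv_interpolant_sq_le hx hy hy' hy'sq
  have hwL2 : ∫ t in (0 : ℝ)..1, (Q t - I t) ^ 2 ≤ h ^ 2 * A :=
    (integral_sq_sub_le_of_orthogonal zero_le_one
      (continuousOn_of_forall_continuousAt fun t ht => (hy t ht).continuousAt) hQ.1 hI.1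
      (hproj _ (hQ.sub hI))).trans
      (integral_sub_interpolant_sq_le hx (fun j hj => (hstep j hj).le) hy hy' hy'sq)
  have hwA : ∫ t in (0 : ℝ)..1, deriv (Q - I) t ^ 2 ≤ 12 * A :=
    calc ∫ t in (0 : ℝ)..1, deriv (Q - I) t ^ 2
        ≤ 12 / h ^ 2 * ∫ t in (0 : ℝ)..1, (Q - I) t ^ 2 :=
          (hQ.sub hI).integral_deriv_sq_le hx hh fun j hj => (hstep j hj).ge
      _ ≤ 12 / h ^ 2 * (h ^ 2 * A) := by gcongr; exact hwL2
      _ = 12 * A := by field_simp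
  calc √(∫ t in (0 : ℝ)..1, deriv Q t ^ 2)
      ≤ √(∫ t in (0 : ℝ)..1, deriv I t ^ 2) + √(∫ t in (0 : ℝ)..1, deriv (Q - I) t ^ 2) :=
        hQ.sqrt_integral_deriv_sq_le hI hx
    _ ≤ √A + √(12 * A) := add_le_add (Real.sqrt_le_sqrt hIA) (Real.sqrt_le_sqrt hwA)
    _ = (1 + √12) * √A := by rw [Real.sqrt_mul (by norm_num)]; ring

end Interpolant

theorem stmt_12_general
    (n : ℕ) (hn : 2 ≤ n) (h : ℝ) (hh : h = 1 / (n : ℝ))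
    (y y' Qy : ℝ → ℝ)
    (hy : ∀ t, HasDerivAt y (y' t) t)
    (hy'L2 : IntervalIntegrable (fun t => (y' t) ^ 2) volume 0 1)
    (hQmem : ModPW n (fun i => (i : ℝ) * h) Qy)
    (hproj : ∀ yh : ℝ → ℝ, ModPW n (fun i => (i : ℝ) * h) yh →
      ∫ t in (0:ℝ)..1, Qy t * yh t = ∫ t in (0:ℝ)..1, y t * yh t) :
    Real.sqrt (∫ t in (0:ℝ)..1, (deriv Qy t) ^ 2) ≤
      (1 + 4 * Real.sqrt 6) * Real.sqrt (∫ t in (0:ℝ)..1, (y' t) ^ 2) := by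
  have hmesh : IsUnitIntervalMesh n fun i => (i : ℝ) * h :=
    hh ▸ isUnitIntervalMesh_uniform (by omega)
  have hy' : IntervalIntegrable y' volume 0 1 := intervalIntegrable_of_sq
    ((funext fun t => (hy t).deriv) ▸ (measurable_deriv y).aestronglyMeasurable) hy'L2
  refine (sqrt_integral_deriv_sq_le_of_orthogonal hmesh (fun j _ => by push_cast; ring)
    (fun t _ => hy t) hy' hy'L2 hQmem hproj).trans ?_
  have hsqrt12 : √12 ≤ 4 * √6 :=
    Real.sqrt_le_iff.2 ⟨by positivity, by nlinarith [Real.sq_sqrt (show (0 : ℝ) ≤ 6 by norm_num)]⟩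
  gcongr

/-- H¹-stability of the L² projection Q_h onto S̃_h¹(0,1)
on the uniform mesh with size h, for y ∈ H¹(0,1) with y'(0) = y'(1) = 0:
‖(Q_h y)'‖_{L²(0,1)} ≤ (1 + 4√6) ‖y'‖_{L²(0,1)}. -/
theorem stmt_12
    (n : ℕ) (hn : 2 ≤ n) (h : ℝ) (hh : h = 1 / (n : ℝ))
    (y y' Qy : ℝ → ℝ)
    (hy : ∀ t, HasDerivAt y (y' t) t)
    (hy'L2 : IntervalIntegrable (fun t => (y' t) ^ 2) volume 0 1)
    (hb0 : y' 0 = 0) (hb1 : y' 1 = 0)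
    (hQmem : ModPW n (fun i => (i : ℝ) * h) Qy)
    (hproj : ∀ yh : ℝ → ℝ, ModPW n (fun i => (i : ℝ) * h) yh →
      ∫ t in (0:ℝ)..1, Qy t * yh t = ∫ t in (0:ℝ)..1, y t * yh t) :
    Real.sqrt (∫ t in (0:ℝ)..1, (deriv Qy t) ^ 2) ≤
      (1 + 4 * Real.sqrt 6) * Real.sqrt (∫ t in (0:ℝ)..1, (y' t) ^ 2) :=
  stmt_12_general n hn h hh y y' Qy hy hy'L2 hQmem hproj
end

section
/- In the abstract setting, if ȳ = T ȳ_e where ȳ_e ∈ Y and T : Y → (seminormed space with form b) satisfies b(v,v) = b(Tv,Tv) for v ∈ Y (i.e., ȳ is the 'trace' of an element ȳ_e ∈ Y), then the solution y_ϱ of b(y_ϱ,·) + ϱ a(y_ϱ,·) = b(ȳ,·) on Y satisfies |y_ϱ − ȳ|_b ≤ ϱ^{1/2} ‖ȳ_e‖_a and ‖y_ϱ − ȳ_e‖_a ≤ ‖ȳ_e‖_a, where ‖v‖_a = a(v,v)^{1/2}. -/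
open scoped RealInnerProductSpace

/-- abstract regularization error estimates when the target ȳ is
the trace of an element ȳ_e ∈ Y (i.e. ȳ agrees with ȳ_e w.r.t. b):
|y_ϱ − ȳ|_b ≤ ϱ^{1/2} ‖ȳ_e‖_a and ‖y_ϱ − ȳ_e‖_a ≤ ‖ȳ_e‖_a. -/
theorem stmt_14
    {H : Type*} [AddCommGroup H] [Module ℝ H]
    {Y : Type*} [NormedAddCommGroup Y] [InnerProductSpace ℝ Y]
    (ι : Y →ₗ[ℝ] H)
    (b : H →ₗ[ℝ] H →ₗ[ℝ] ℝ)
    (hb_symm : ∀ u v : H, b u v = b v u)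
    (hb_nonneg : ∀ u : H, 0 ≤ b u u)
    (hb_bdd : ∃ C : ℝ, ∀ u v : Y, |b (ι u) (ι v)| ≤ C * ‖u‖ * ‖v‖)
    (ϱ : ℝ) (hϱ : 0 < ϱ)
    (ybar : H) (yρ ybar_e : Y)
    (htrace : ∀ y : Y, b (ι yρ - ι ybar_e) (ι y) = b (ι yρ - ybar) (ι y))
    (htraceb : b (ι yρ - ι ybar_e) (ι yρ - ι ybar_e)
      = b (ι yρ - ybar) (ι yρ - ybar))
    (hsol : ∀ y : Y, b (ι yρ) (ι y) + ϱ * ⟪yρ, y⟫ = b ybar (ι y)) :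
    Real.sqrt (b (ι yρ - ybar) (ι yρ - ybar)) ≤ Real.sqrt ϱ * ‖ybar_e‖ ∧
    ‖yρ - ybar_e‖ ≤ ‖ybar_e‖ := by
  set e : Y := yρ - ybar_e with he
  have hιe : ι e = ι yρ - ι ybar_e := by simp [he, map_sub]
  have h1 : b (ι yρ - ybar) (ι e) + ϱ * ⟪yρ, e⟫ = 0 := by
    have := hsol e
    have hsub : b (ι yρ - ybar) (ι e) = b (ι yρ) (ι e) - b ybar (ι e) := by
      simp [map_sub]
    linarith [this, hsub]
  have h2 := htrace e
  rw [← hιe] at h2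
  have hE : b (ι e) (ι e) + ϱ * ⟪yρ, e⟫ = 0 := by rw [h2]; exact h1
  have hinner : ⟪yρ, e⟫ = ‖e‖ ^ 2 + ⟪ybar_e, e⟫ := by
    have hy : yρ = e + ybar_e := by simp [he]
    rw [hy, inner_add_left, real_inner_self_eq_norm_sq]
  have hEnn : 0 ≤ b (ι e) (ι e) := hb_nonneg _
  have hcs : -(‖ybar_e‖ * ‖e‖) ≤ ⟪ybar_e, e⟫ :=
    (abs_le.mp (abs_real_inner_le_norm ybar_e e)).1
  have key : b (ι e) (ι e) + ϱ * ‖e‖ ^ 2 ≤ ϱ * (‖ybar_e‖ * ‖e‖) := by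
    nlinarith [hE, hinner, hcs, hϱ.le]
  have hnorm : ‖e‖ ≤ ‖ybar_e‖ := by
    by_contra h
    push_neg at h
    have hepos : 0 < ‖e‖ := lt_of_le_of_lt (norm_nonneg _) h
    nlinarith [key, hEnn, mul_pos hϱ hepos, norm_nonneg ybar_e]
  constructor
  · have hEb : b (ι yρ - ybar) (ι yρ - ybar) = b (ι e) (ι e) := by
      rw [hιe]; exact htraceb.symm
    rw [hEb]
    have hle : b (ι e) (ι e) ≤ ϱ * ‖ybar_e‖ ^ 2 := by
      nlinarith [key, mul_le_mul_of_nonneg_left hnorm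
        (mul_nonneg hϱ.le (norm_nonneg ybar_e)),
        mul_nonneg hϱ.le (sq_nonneg ‖e‖)]
    calc Real.sqrt (b (ι e) (ι e)) ≤ Real.sqrt (ϱ * ‖ybar_e‖ ^ 2) :=
          Real.sqrt_le_sqrt hle
      _ = Real.sqrt ϱ * ‖ybar_e‖ := by
          rw [Real.sqrt_mul hϱ.le, Real.sqrt_sq (norm_nonneg _)]
  · exact hnorm
end
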